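/- For every integer n ≥ 2 and all smooth compactly supported functions u, τ, φ : ℝⁿ → ℝ, the Einstein–Hilbert action corrected by the Wess–Zumino counter-term is Weyl invariant: S(u + φ) + ½·Γ_WZ(τ + φ, u + φ) = S(u) + ½·Γ_WZ(τ, u), where the Weyl transformation with parameter φ acts by g ↦ e^{2φ} g (i.e. u ↦ u + φ) and on the dilaton field by τ ↦ τ + φ. -/

import Mathlib

open MeasureTheory Real

set_option maxHeartbeats 1000000

noncomputable section

/-- Coordinate partial derivative `∂ᵢ f x` on `ℝⁿ = EuclideanSpace ℝ (Fin n)`. -/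
def pd (n : ℕ) (f : EuclideanSpace ℝ (Fin n) → ℝ) (i : Fin n)
    (x : EuclideanSpace ℝ (Fin n)) : ℝ :=
  fderiv ℝ f x (EuclideanSpace.single i 1)

/-- Second coordinate partial derivative `∂ᵢ∂ᵢ f x`. -/
def pd2 (n : ℕ) (f : EuclideanSpace ℝ (Fin n) → ℝ) (i : Fin n)
    (x : EuclideanSpace ℝ (Fin n)) : ℝ :=
  pd n (pd n f i) i x

/-- Scalar curvature expression of the conformally flat metric `g_v = e^{2v} δ`:
`R(v) = e^{−2v} ( −2(n−1) Σᵢ ∂ᵢ∂ᵢ v − (n−1)(n−2) Σᵢ (∂ᵢ v)² )`. -/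
def Rscal (n : ℕ) (v : EuclideanSpace ℝ (Fin n) → ℝ)
    (x : EuclideanSpace ℝ (Fin n)) : ℝ :=
  Real.exp (-2 * v x) *
    (-2 * ((n : ℝ) - 1) * ∑ i, pd2 n v i x
      - ((n : ℝ) - 1) * ((n : ℝ) - 2) * ∑ i, (pd n v i x) ^ 2)

/-- Laplacian of `g_v` acting on `f`:
`Δ_v f = −e^{−2v} ( Σᵢ ∂ᵢ∂ᵢ f + (n−2) Σᵢ ∂ᵢ v ∂ᵢ f )`. -/
def lap (n : ℕ) (v f : EuclideanSpace ℝ (Fin n) → ℝ)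
    (x : EuclideanSpace ℝ (Fin n)) : ℝ :=
  -Real.exp (-2 * v x) *
    (∑ i, pd2 n f i x + ((n : ℝ) - 2) * ∑ i, pd n v i x * pd n f i x)

/-- Gradient square `|∇f|²_v = e^{−2v} Σᵢ (∂ᵢ f)²`. -/
def gradSq (n : ℕ) (v f : EuclideanSpace ℝ (Fin n) → ℝ)
    (x : EuclideanSpace ℝ (Fin n)) : ℝ :=
  Real.exp (-2 * v x) * ∑ i, (pd n f i x) ^ 2

/-- Einstein–Hilbert action `S(u) = ∫ e^{nu} R(u) dx`. -/
def SEH (n : ℕ) (u : EuclideanSpace ℝ (Fin n) → ℝ) : ℝ :=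
  ∫ x, Real.exp ((n : ℝ) * u x) * Rscal n u x

/-- Anomaly functional
`A(φ,u) = ∫ e^{nu} ( (n−2) φ R(u) + 2(n−1) Δ_u φ ) dx`. -/
def anomaly (n : ℕ) (φ u : EuclideanSpace ℝ (Fin n) → ℝ) : ℝ :=
  ∫ x, Real.exp ((n : ℝ) * u x) *
    (((n : ℝ) - 2) * φ x * Rscal n u x + 2 * ((n : ℝ) - 1) * lap n u φ x)

/-- Wess–Zumino functional `Γ_WZ(τ,u) = ∫₀¹ A(−2τ, u − tτ) dt`. -/
def WZ (n : ℕ) (τ u : EuclideanSpace ℝ (Fin n) → ℝ) : ℝ :=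
  ∫ t in (0 : ℝ)..1,
    anomaly n (fun y => -2 * τ y) (fun y => u y - t * τ y)

/-! ### Auxiliary lemmas -/

section Aux

lemma contDiff_pd (n : ℕ) {f : EuclideanSpace ℝ (Fin n) → ℝ}
    (hf : ContDiff ℝ (⊤ : ℕ∞) f) (i : Fin n) : ContDiff ℝ (⊤ : ℕ∞) (pd n f i) :=
  (hf.fderiv_right (by simp)).clm_apply contDiff_const

lemma contDiff_pd2 (n : ℕ) {f : EuclideanSpace ℝ (Fin n) → ℝ}
    (hf : ContDiff ℝ (⊤ : ℕ∞) f) (i : Fin n) : ContDiff ℝ (⊤ : ℕ∞) (pd2 n f i) :=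
  contDiff_pd n (contDiff_pd n hf i) i

lemma pd_sub_mul (n : ℕ) {f g : EuclideanSpace ℝ (Fin n) → ℝ}
    (hf : ContDiff ℝ (⊤ : ℕ∞) f) (hg : ContDiff ℝ (⊤ : ℕ∞) g) (c : ℝ) (i : Fin n)
    (x : EuclideanSpace ℝ (Fin n)) :
    pd n (fun y => f y - c * g y) i x = pd n f i x - c * pd n g i x := by
  unfold pd
  have hfd := hf.differentiable (by simp) x
  have hgd := hg.differentiable (by simp) x
  rw [fderiv_fun_sub hfd (hgd.const_mul c), fderiv_const_mul hgd c]
  simp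

lemma pd_const_mul (n : ℕ) {g : EuclideanSpace ℝ (Fin n) → ℝ}
    (hg : ContDiff ℝ (⊤ : ℕ∞) g) (c : ℝ) (i : Fin n) (x : EuclideanSpace ℝ (Fin n)) :
    pd n (fun y => c * g y) i x = c * pd n g i x := by
  unfold pd
  rw [fderiv_const_mul (hg.differentiable (by simp) x) c]
  simp

lemma pd2_sub_mul (n : ℕ) {f g : EuclideanSpace ℝ (Fin n) → ℝ}
    (hf : ContDiff ℝ (⊤ : ℕ∞) f) (hg : ContDiff ℝ (⊤ : ℕ∞) g) (c : ℝ) (i : Fin n)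
    (x : EuclideanSpace ℝ (Fin n)) :
    pd2 n (fun y => f y - c * g y) i x = pd2 n f i x - c * pd2 n g i x := by
  unfold pd2
  have h1 : pd n (fun y => f y - c * g y) i = fun x => pd n f i x - c * pd n g i x :=
    funext (pd_sub_mul n hf hg c i)
  rw [h1]
  exact pd_sub_mul n (contDiff_pd n hf i) (contDiff_pd n hg i) c i x

lemma pd2_const_mul (n : ℕ) {g : EuclideanSpace ℝ (Fin n) → ℝ}
    (hg : ContDiff ℝ (⊤ : ℕ∞) g) (c : ℝ) (i : Fin n) (x : EuclideanSpace ℝ (Fin n)) :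
    pd2 n (fun y => c * g y) i x = c * pd2 n g i x := by
  unfold pd2
  have h1 : pd n (fun y => c * g y) i = fun x => c * pd n g i x :=
    funext (pd_const_mul n hg c i)
  rw [h1]
  exact pd_const_mul n (contDiff_pd n hg i) c i x

lemma pd_eq_zero (n : ℕ) {f : EuclideanSpace ℝ (Fin n) → ℝ} (i : Fin n)
    {x : EuclideanSpace ℝ (Fin n)} (hx : x ∉ tsupport f) : pd n f i x = 0 := by
  unfold pd
  have : fderiv ℝ f x = 0 := by
    by_contra h
    exact hx (support_fderiv_subset (𝕜 := ℝ) h)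
  rw [this]; simp

lemma tsupport_pd_subset (n : ℕ) {f : EuclideanSpace ℝ (Fin n) → ℝ} (i : Fin n) :
    tsupport (pd n f i) ⊆ tsupport f := by
  apply closure_minimal _ (isClosed_tsupport f)
  intro x hx
  by_contra h
  exact hx (pd_eq_zero n i h)

lemma pd2_eq_zero (n : ℕ) {f : EuclideanSpace ℝ (Fin n) → ℝ} (i : Fin n)
    {x : EuclideanSpace ℝ (Fin n)} (hx : x ∉ tsupport f) : pd2 n f i x = 0 :=
  pd_eq_zero n i (fun h => hx (tsupport_pd_subset n i h))

namespace EHWZ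

/-- Coefficient `A` (constant-in-`t` part of `e^{(n-2)v_t}`-stripped EH density). -/
def A (n : ℕ) (u : EuclideanSpace ℝ (Fin n) → ℝ) (x : EuclideanSpace ℝ (Fin n)) : ℝ :=
  -2 * ((n : ℝ) - 1) * ∑ i, pd2 n u i x
    - ((n : ℝ) - 1) * ((n : ℝ) - 2) * ∑ i, (pd n u i x) ^ 2

/-- Coefficient of `t`. -/
def B (n : ℕ) (u τ : EuclideanSpace ℝ (Fin n) → ℝ) (x : EuclideanSpace ℝ (Fin n)) : ℝ :=
  2 * ((n : ℝ) - 1) * ∑ i, pd2 n τ i x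
    + 2 * ((n : ℝ) - 1) * ((n : ℝ) - 2) * ∑ i, pd n u i x * pd n τ i x

/-- Coefficient of `t²`. -/
def C (n : ℕ) (τ : EuclideanSpace ℝ (Fin n) → ℝ) (x : EuclideanSpace ℝ (Fin n)) : ℝ :=
  -((n : ℝ) - 1) * ((n : ℝ) - 2) * ∑ i, (pd n τ i x) ^ 2

/-- The EH density of `u - tτ`. -/
def h (n : ℕ) (u τ : EuclideanSpace ℝ (Fin n) → ℝ) (t : ℝ)
    (x : EuclideanSpace ℝ (Fin n)) : ℝ :=
  Real.exp (((n : ℝ) - 2) * (u x - t * τ x)) *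
    (A n u x + t * B n u τ x + t ^ 2 * C n τ x)

/-- `t`-derivative of the EH density of `u - tτ`. -/
def d (n : ℕ) (u τ : EuclideanSpace ℝ (Fin n) → ℝ) (t : ℝ)
    (x : EuclideanSpace ℝ (Fin n)) : ℝ :=
  Real.exp (((n : ℝ) - 2) * (u x - t * τ x)) *
    (-(((n : ℝ) - 2) * τ x) * (A n u x + t * B n u τ x + t ^ 2 * C n τ x)
      + (B n u τ x + 2 * t * C n τ x))

variable {n : ℕ} {u τ : EuclideanSpace ℝ (Fin n) → ℝ}

lemma sum_sq_expand (hu : ContDiff ℝ (⊤ : ℕ∞) u) (hτ : ContDiff ℝ (⊤ : ℕ∞) τ) (t : ℝ)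
    (x : EuclideanSpace ℝ (Fin n)) :
    ∑ i, (pd n u i x - t * pd n τ i x) ^ 2
      = (∑ i, (pd n u i x) ^ 2) - 2 * t * (∑ i, pd n u i x * pd n τ i x)
        + t ^ 2 * (∑ i, (pd n τ i x) ^ 2) := by
  rw [Finset.mul_sum, Finset.mul_sum, ← Finset.sum_sub_distrib, ← Finset.sum_add_distrib]
  exact Finset.sum_congr rfl fun i _ => by ring

lemma step1 (hu : ContDiff ℝ (⊤ : ℕ∞) u) (hτ : ContDiff ℝ (⊤ : ℕ∞) τ) (t : ℝ)
    (x : EuclideanSpace ℝ (Fin n)) :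
    Real.exp ((n : ℝ) * (u x - t * τ x)) * Rscal n (fun y => u y - t * τ y) x
      = h n u τ t x := by
  unfold Rscal h A B C
  simp only [pd2_sub_mul n hu hτ t, pd_sub_mul n hu hτ t]
  rw [sum_sq_expand hu hτ t x, Finset.sum_sub_distrib, ← Finset.mul_sum]
  rw [← mul_assoc, ← Real.exp_add]
  have harg : (n : ℝ) * (u x - t * τ x) + -2 * (u x - t * τ x)
      = ((n : ℝ) - 2) * (u x - t * τ x) := by ring
  rw [harg]
  ring

lemma step2 (hu : ContDiff ℝ (⊤ : ℕ∞) u) (hτ : ContDiff ℝ (⊤ : ℕ∞) τ) (t : ℝ)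
    (x : EuclideanSpace ℝ (Fin n)) :
    Real.exp ((n : ℝ) * (u x - t * τ x)) *
      (((n : ℝ) - 2) * (-2 * τ x) * Rscal n (fun y => u y - t * τ y) x
        + 2 * ((n : ℝ) - 1) * lap n (fun y => u y - t * τ y) (fun y => -2 * τ y) x)
      = 2 * d n u τ t x := by
  have hm2 : ∀ i y, pd n (fun y => (-2 : ℝ) * τ y) i y = -2 * pd n τ i y :=
    fun i y => pd_const_mul n hτ (-2) i y
  have hm2' : ∀ i y, pd2 n (fun y => (-2 : ℝ) * τ y) i y = -2 * pd2 n τ i y :=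
    fun i y => pd2_const_mul n hτ (-2) i y
  unfold Rscal lap d A B C
  simp only [pd2_sub_mul n hu hτ t, pd_sub_mul n hu hτ t, hm2, hm2']
  rw [sum_sq_expand hu hτ t x]
  have e2 : ∑ i, (pd2 n u i x - t * pd2 n τ i x)
      = (∑ i, pd2 n u i x) - t * ∑ i, pd2 n τ i x := by
    rw [Finset.sum_sub_distrib, Finset.mul_sum]
  have e3 : ∑ i, (-2 : ℝ) * pd2 n τ i x = -2 * ∑ i, pd2 n τ i x := by
    rw [Finset.mul_sum]
  have e4 : ∑ i, (pd n u i x - t * pd n τ i x) * (-2 * pd n τ i x)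
      = -2 * (∑ i, pd n u i x * pd n τ i x) + 2 * t * ∑ i, (pd n τ i x) ^ 2 := by
    rw [Finset.mul_sum, Finset.mul_sum, ← Finset.sum_add_distrib]
    exact Finset.sum_congr rfl fun i _ => by ring
  rw [e2, e3, e4]
  rw [show Real.exp (-2 * (u x - t * τ x)) =
      Real.exp (((n : ℝ) - 2) * (u x - t * τ x)) / Real.exp ((n : ℝ) * (u x - t * τ x)) by
    rw [← Real.exp_sub]; ring_nf]
  field_simp
  ring

lemma step3 (t : ℝ) (x : EuclideanSpace ℝ (Fin n)) :
    HasDerivAt (fun s => h n u τ s x) (d n u τ t x) t := by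
  have hlin : HasDerivAt (fun s : ℝ => ((n : ℝ) - 2) * (u x - s * τ x))
      (((n : ℝ) - 2) * (0 - τ x)) t :=
    ((hasDerivAt_const t (u x)).sub (hasDerivAt_mul_const (τ x))).const_mul _
  have hexp := hlin.exp
  have hpoly : HasDerivAt (fun s : ℝ => A n u x + s * B n u τ x + s ^ 2 * C n τ x)
      (0 + B n u τ x + 2 * t ^ (2 - 1) * C n τ x) t :=
    ((hasDerivAt_const t (A n u x)).add (hasDerivAt_mul_const (B n u τ x))).add
      ((hasDerivAt_pow 2 t).mul_const (C n τ x))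
  have := hexp.fun_mul hpoly
  unfold h d
  refine this.congr_deriv ?_
  push_cast
  ring

lemma contA (hu : ContDiff ℝ (⊤ : ℕ∞) u) : Continuous (A n u) := by
  unfold A
  exact (continuous_const.mul (continuous_finset_sum _ fun i _ =>
      (contDiff_pd2 n hu i).continuous)).sub
    (continuous_const.mul (continuous_finset_sum _ fun i _ =>
      ((contDiff_pd n hu i).continuous.pow 2)))

lemma contB (hu : ContDiff ℝ (⊤ : ℕ∞) u) (hτ : ContDiff ℝ (⊤ : ℕ∞) τ) : Continuous (B n u τ) := by
  unfold B
  exact (continuous_const.mul (continuous_finset_sum _ fun i _ =>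
      (contDiff_pd2 n hτ i).continuous)).add
    (continuous_const.mul (continuous_finset_sum _ fun i _ =>
      ((contDiff_pd n hu i).continuous.mul (contDiff_pd n hτ i).continuous)))

lemma contC (hτ : ContDiff ℝ (⊤ : ℕ∞) τ) : Continuous (C n τ) := by
  unfold C
  exact continuous_const.mul (continuous_finset_sum _ fun i _ =>
    ((contDiff_pd n hτ i).continuous.pow 2))

lemma contD (hu : ContDiff ℝ (⊤ : ℕ∞) u) (hτ : ContDiff ℝ (⊤ : ℕ∞) τ) :
    Continuous (fun p : ℝ × EuclideanSpace ℝ (Fin n) => d n u τ p.1 p.2) := by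
  unfold d
  have h1 : Continuous (fun p : ℝ × EuclideanSpace ℝ (Fin n) =>
      A n u p.2 + p.1 * B n u τ p.2 + p.1 ^ 2 * C n τ p.2) := by
    exact (((contA hu).comp continuous_snd).add
      (continuous_fst.mul ((contB hu hτ).comp continuous_snd))).add
      ((continuous_fst.pow 2).mul ((contC hτ).comp continuous_snd))
  refine Continuous.mul ?_ ?_
  · exact (Real.continuous_exp.comp (continuous_const.mul
      ((hu.continuous.comp continuous_snd).sub
        (continuous_fst.mul (hτ.continuous.comp continuous_snd)))))
  · exact ((continuous_const.mul (hτ.continuous.comp continuous_snd)).neg.mul h1).add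
      (((contB hu hτ).comp continuous_snd).add
        ((continuous_const.mul continuous_fst).mul ((contC hτ).comp continuous_snd)))

lemma A_zero {x : EuclideanSpace ℝ (Fin n)} (hx : x ∉ tsupport u) : A n u x = 0 := by
  unfold A
  rw [Finset.sum_eq_zero fun i _ => pd2_eq_zero n i hx,
    Finset.sum_eq_zero fun i _ => by rw [pd_eq_zero n i hx]; ring]
  ring

lemma B_zero {x : EuclideanSpace ℝ (Fin n)} (hx : x ∉ tsupport τ) : B n u τ x = 0 := by
  unfold B
  rw [Finset.sum_eq_zero fun i _ => pd2_eq_zero n i hx,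
    Finset.sum_eq_zero fun i _ => by rw [pd_eq_zero n i hx]; ring]
  ring

lemma C_zero {x : EuclideanSpace ℝ (Fin n)} (hx : x ∉ tsupport τ) : C n τ x = 0 := by
  unfold C
  rw [Finset.sum_eq_zero fun i _ => by rw [pd_eq_zero n i hx]; ring]
  ring

lemma h_zero {x : EuclideanSpace ℝ (Fin n)}
    (hxu : x ∉ tsupport u) (hxτ : x ∉ tsupport τ) (t : ℝ) : h n u τ t x = 0 := by
  unfold h
  rw [A_zero hxu, B_zero hxτ, C_zero hxτ]
  ring

lemma d_zero {x : EuclideanSpace ℝ (Fin n)}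
    (hxu : x ∉ tsupport u) (hxτ : x ∉ tsupport τ) (t : ℝ) : d n u τ t x = 0 := by
  unfold d
  rw [A_zero hxu, B_zero hxτ, C_zero hxτ,
    image_eq_zero_of_notMem_tsupport hxτ]
  ring

/-- The key identity: `S(u) + ½ Γ_WZ(τ,u) = S(u − τ)`. -/
lemma key (n : ℕ) (u τ : EuclideanSpace ℝ (Fin n) → ℝ)
    (hu : ContDiff ℝ (⊤ : ℕ∞) u) (hτ : ContDiff ℝ (⊤ : ℕ∞) τ)
    (hcu : HasCompactSupport u) (hcτ : HasCompactSupport τ) :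
    SEH n u + (1 / 2) * WZ n τ u = SEH n (fun y => u y - τ y) := by
  classical
  set K : Set (EuclideanSpace ℝ (Fin n)) := tsupport u ∪ tsupport τ with hKdef
  have hK : IsCompact K := hcu.union hcτ
  have hKc : IsClosed K := (isClosed_tsupport u).union (isClosed_tsupport τ)
  have hd0 : ∀ (t : ℝ) x, x ∉ K → d n u τ t x = 0 := fun t x hx =>
    d_zero (fun h => hx (Or.inl h)) (fun h => hx (Or.inr h)) t
  have hh0 : ∀ (t : ℝ) x, x ∉ K → h n u τ t x = 0 := fun t x hx =>
    h_zero (fun h => hx (Or.inl h)) (fun h => hx (Or.inr h)) t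
  have hcontD := contD hu hτ
  -- bound
  obtain ⟨M, hM⟩ := (isCompact_Icc.prod hK).exists_bound_of_continuousOn
    hcontD.continuousOn
  set M' : ℝ := max M 0 with hM'def
  -- integrability of h t
  have hconth : ∀ t : ℝ, Continuous (fun x => h n u τ t x) := by
    intro t
    unfold h
    exact (Real.continuous_exp.comp (continuous_const.mul
        (hu.continuous.sub (continuous_const.mul hτ.continuous)))).mul
      (((contA hu).add (continuous_const.mul (contB hu hτ))).add
        (continuous_const.mul (contC hτ)))
  have hinth : ∀ t : ℝ, Integrable (fun x => h n u τ t x) := by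
    intro t
    refine (hconth t).integrable_of_hasCompactSupport ?_
    exact HasCompactSupport.intro hK (fun x hx => hh0 t x hx)
  -- product integrability
  have hmeasK : MeasurableSet K := hKc.measurableSet
  have hgint : Integrable
      (fun p : ℝ × EuclideanSpace ℝ (Fin n) => (1 : ℝ) * K.indicator (fun _ => 2 * M') p.2)
      ((volume.restrict (Set.Ioc (0 : ℝ) 1)).prod volume) := by
    have hi1 : Integrable (fun _ : ℝ => (1 : ℝ)) (volume.restrict (Set.Ioc (0 : ℝ) 1)) :=
      integrableOn_const measure_Ioc_lt_top.ne enorm_ne_top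
    have hi2 : Integrable (K.indicator fun _ => 2 * M') (volume : Measure (EuclideanSpace ℝ (Fin n))) :=
      (integrable_indicator_iff hmeasK).mpr
        (integrableOn_const hK.measure_lt_top.ne enorm_ne_top)
    exact hi1.mul_prod hi2
  have hbound : ∀ᵐ p : ℝ × EuclideanSpace ℝ (Fin n)
      ∂((volume.restrict (Set.Ioc (0 : ℝ) 1)).prod volume),
      ‖2 * d n u τ p.1 p.2‖ ≤ (1 : ℝ) * K.indicator (fun _ => 2 * M') p.2 := by
    rw [Measure.restrict_prod_eq_prod_univ]
    refine ae_restrict_of_forall_mem (measurableSet_Ioc.prod MeasurableSet.univ) ?_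
    rintro ⟨t, x⟩ ⟨ht, -⟩
    by_cases hx : x ∈ K
    · have h1 : ‖d n u τ t x‖ ≤ M := hM (t, x) ⟨⟨le_of_lt ht.1, ht.2⟩, hx⟩
      rw [Set.indicator_of_mem hx]
      rw [norm_mul]
      simp only [one_mul]
      calc ‖(2:ℝ)‖ * ‖d n u τ t x‖ ≤ 2 * M := by
            rw [show ‖(2:ℝ)‖ = 2 by norm_num]
            exact mul_le_mul_of_nonneg_left h1 (by norm_num)
        _ ≤ 2 * M' := by
            have : M ≤ M' := le_max_left _ _
            linarith
    · rw [Set.indicator_of_notMem hx, hd0 t x hx]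
      simp
  have hprodInt : Integrable
      (Function.uncurry fun t x => 2 * d n u τ t x)
      ((volume.restrict (Set.Ioc (0 : ℝ) 1)).prod volume) := by
    refine Integrable.mono' hgint ?_ hbound
    exact (continuous_const.mul hcontD).aestronglyMeasurable
  -- WZ rewriting
  have hWZ : WZ n τ u = ∫ t in Set.Ioc (0 : ℝ) 1, ∫ x, 2 * d n u τ t x := by
    unfold WZ
    rw [intervalIntegral.integral_of_le zero_le_one]
    refine integral_congr_ae (Filter.Eventually.of_forall fun t => ?_)
    unfold anomaly
    refine integral_congr_ae (Filter.Eventually.of_forall fun x => ?_)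
    exact step2 hu hτ t x
  have hswap : (∫ t in Set.Ioc (0 : ℝ) 1, ∫ x, 2 * d n u τ t x)
      = ∫ x, ∫ t in Set.Ioc (0 : ℝ) 1, 2 * d n u τ t x :=
    integral_integral_swap hprodInt
  have hinner : ∀ x, (∫ t in Set.Ioc (0 : ℝ) 1, 2 * d n u τ t x)
      = 2 * (h n u τ 1 x - h n u τ 0 x) := by
    intro x
    rw [← intervalIntegral.integral_of_le zero_le_one]
    have hcd : Continuous (fun t : ℝ => d n u τ t x) := by
      unfold d
      fun_prop
    rw [intervalIntegral.integral_const_mul]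
    rw [intervalIntegral.integral_eq_sub_of_hasDerivAt
      (fun t _ => step3 t x) (hcd.intervalIntegrable 0 1)]
  have hSEH : ∀ t : ℝ, SEH n (fun y => u y - t * τ y) = ∫ x, h n u τ t x := by
    intro t
    unfold SEH
    refine integral_congr_ae (Filter.Eventually.of_forall fun x => ?_)
    exact step1 hu hτ t x
  have hu0 : (fun y => u y - (0 : ℝ) * τ y) = u := by funext y; ring
  have hu1 : (fun y => u y - (1 : ℝ) * τ y) = fun y => u y - τ y := by funext y; ring
  have hS0 : SEH n u = ∫ x, h n u τ 0 x :=
    (congrArg (SEH n) hu0.symm).trans (hSEH 0)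
  have hS1 : SEH n (fun y => u y - τ y) = ∫ x, h n u τ 1 x :=
    (congrArg (SEH n) hu1.symm).trans (hSEH 1)
  have hfinal : WZ n τ u = 2 * (SEH n (fun y => u y - τ y) - SEH n u) := by
    rw [hWZ, hswap]
    rw [integral_congr_ae (Filter.Eventually.of_forall hinner)]
    rw [integral_const_mul 2, integral_sub (hinth 1) (hinth 0), hS0, hS1]
  rw [hfinal]
  ring

end EHWZ

end Aux

/-- The Einstein–Hilbert action corrected by the Wess–Zumino counter-term is
Weyl invariant: `S_EH + ½ Γ_WZ` is unchanged under `u ↦ u + φ`, `τ ↦ τ + φ`. -/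
theorem EH_plus_WZ_is_weyl_invariant
    (n : ℕ) (hn : 2 ≤ n)
    (u τ φ : EuclideanSpace ℝ (Fin n) → ℝ)
    (hu : ContDiff ℝ (⊤ : ℕ∞) u) (hτ : ContDiff ℝ (⊤ : ℕ∞) τ) (hφ : ContDiff ℝ (⊤ : ℕ∞) φ)
    (hcu : HasCompactSupport u) (hcτ : HasCompactSupport τ)
    (hcφ : HasCompactSupport φ) :
    SEH n (fun y => u y + φ y)
        + (1 / 2) * WZ n (fun y => τ y + φ y) (fun y => u y + φ y)
      = SEH n u + (1 / 2) * WZ n τ u := by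
  have h1 := EHWZ.key n (fun y => u y + φ y) (fun y => τ y + φ y)
    (hu.add hφ) (hτ.add hφ) (hcu.add hcφ) (hcτ.add hcφ)
  have h2 := EHWZ.key n u τ hu hτ hcu hcτ
  rw [h1, h2]
  congr 1
  funext y
  ring
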